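/- arXiv:1904.00483 — 6 statements merged into one kernel-verified Lean document; each statement's English description precedes it below -/
import Mathlib

section
/- The total length of a geodesic net N in ℝⁿ equals −∑_{v∈S} ⟨v, Imb(v)⟩, where the sum runs over the set S of unbalanced vertices and each vertex v is regarded as a vector in ℝⁿ. -/
/-!
Every edge `vw` is seen twice in `∑_v ⟪v, Imb v⟫`, once from each endpoint, and the two
contributions add up to `(⟪v, w - v⟫ + ⟪w, v - w⟫) / ‖w - v‖ = -‖w - v‖`.
So the sum over all vertices is `-L(N)`, and the balanced vertices contribute nothing.
-/

open RealInnerProductSpace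

theorem Finset.sum_sum_filter_swap_of_symm {α M : Type*} [AddCommMonoid M]
    (V : Finset α) (r : α → α → Prop) [DecidableRel r] [Std.Symm r] (f : α → α → M) :
    ∑ v ∈ V, ∑ w ∈ V.filter (fun w => r v w), f w v
      = ∑ v ∈ V, ∑ w ∈ V.filter (fun w => r v w), f v w := by
  simp only [Finset.sum_filter]
  rw [Finset.sum_comm]
  simp only [Std.Symm.iff]

variable {F : Type*} [NormedAddCommGroup F] [InnerProductSpace ℝ F]

theorem inv_norm_mul_inner_sub_add_swap (x y : F) :
    ‖y - x‖⁻¹ * ⟪x, y - x⟫ + ‖x - y‖⁻¹ * ⟪y, x - y⟫ = -‖y - x‖ := by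
  have hinner : ⟪x, y - x⟫ + ⟪y, x - y⟫ = -(‖y - x‖ * ‖y - x‖) := by
    rw [← real_inner_self_eq_norm_mul_norm, ← neg_sub y x, inner_neg_right, ← sub_eq_add_neg,
      ← inner_sub_left, ← inner_neg_left, neg_sub]
  rw [norm_sub_rev x y, ← mul_add, hinner, mul_neg, ← mul_assoc, inv_mul_mul_self]

namespace GeodesicNet

variable (V : Finset F) (r : F → F → Prop) [DecidableRel r]

noncomputable def imbalance (v : F) : F :=
  ∑ w ∈ V.filter (fun w => r v w), ‖w - v‖⁻¹ • (w - v)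

noncomputable def length : ℝ :=
  (1 / 2 : ℝ) * ∑ v ∈ V, ∑ w ∈ V.filter (fun w => r v w), ‖w - v‖

theorem inner_imbalance (v : F) :
    ⟪v, imbalance V r v⟫ = ∑ w ∈ V.filter (fun w => r v w), ‖w - v‖⁻¹ * ⟪v, w - v⟫ := by
  simp only [imbalance, inner_sum, real_inner_smul_right]

theorem sum_inner_imbalance_eq_neg_length [Std.Symm r] :
    ∑ v ∈ V, ⟪v, imbalance V r v⟫ = -length V r := by
  have hswap := Finset.sum_sum_filter_swap_of_symm V r fun v w => ‖w - v‖⁻¹ * ⟪v, w - v⟫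
  have hdouble : 2 * ∑ v ∈ V, ⟪v, imbalance V r v⟫
      = -∑ v ∈ V, ∑ w ∈ V.filter (fun w => r v w), ‖w - v‖ := by
    simp only [inner_imbalance]
    rw [two_mul]
    nth_rw 2 [← hswap]
    simp only [← Finset.sum_add_distrib, inv_norm_mul_inner_sub_add_swap, Finset.sum_neg_distrib]
  rw [length]
  linarith

end GeodesicNet

theorem length_eq_neg_sum_inner_imbalance_general (n : ℕ)
    (V S : Finset (EuclideanSpace ℝ (Fin n)))
    (E : EuclideanSpace ℝ (Fin n) → EuclideanSpace ℝ (Fin n) → Prop)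
    [DecidableRel E]
    (hsymm : Symmetric E)
    (hSV : S ⊆ V)
    (Imb : EuclideanSpace ℝ (Fin n) → EuclideanSpace ℝ (Fin n))
    (hImb : ∀ v, Imb v = ∑ w ∈ V.filter (fun w => E v w), (‖w - v‖)⁻¹ • (w - v))
    (hbal : ∀ v ∈ V, v ∉ S → Imb v = 0) :
    (1 / 2 : ℝ) * ∑ v ∈ V, ∑ w ∈ V.filter (fun w => E v w), ‖w - v‖
      = -∑ v ∈ S, (inner ℝ v (Imb v) : ℝ) := by
  change GeodesicNet.length V E = _
  have : Std.Symm E := ⟨hsymm⟩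
  have hImb' : Imb = GeodesicNet.imbalance V E := funext hImb
  have hS : ∑ v ∈ S, ⟪v, Imb v⟫ = ∑ v ∈ V, ⟪v, Imb v⟫ :=
    Finset.sum_subset hSV fun v hv hvS => by rw [hbal v hv hvS, inner_zero_right]
  rw [hS, hImb', GeodesicNet.sum_inner_imbalance_eq_neg_length, neg_neg]

/-- The total length of a geodesic net in ℝⁿ (each edge counted once; summing over
ordered pairs counts each edge twice, whence the factor ½) equals
`-∑_{v ∈ S} ⟪v, Imb v⟫`, where `S` is the set of unbalanced vertices. -/
theorem length_eq_neg_sum_inner_imbalance (n : ℕ)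
    (V S : Finset (EuclideanSpace ℝ (Fin n)))
    (E : EuclideanSpace ℝ (Fin n) → EuclideanSpace ℝ (Fin n) → Prop)
    [DecidableRel E]
    (hsymm : Symmetric E)
    (hne : ∀ v w, E v w → v ≠ w)
    (hmem : ∀ v w, E v w → v ∈ V ∧ w ∈ V)
    (hSV : S ⊆ V)
    (Imb : EuclideanSpace ℝ (Fin n) → EuclideanSpace ℝ (Fin n))
    (hImb : ∀ v, Imb v = ∑ w ∈ V.filter (fun w => E v w), (‖w - v‖)⁻¹ • (w - v))
    (hbal : ∀ v ∈ V, v ∉ S → Imb v = 0) :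
    (1 / 2 : ℝ) * ∑ v ∈ V, ∑ w ∈ V.filter (fun w => E v w), ‖w - v‖
      = -∑ v ∈ S, (inner ℝ v (Imb v) : ℝ) :=
  length_eq_neg_sum_inner_imbalance_general n V S E hsymm hSV Imb hImb hbal
end

section
/- If v is a balanced vertex of degree 4 in a geodesic net in ℝ², then the four incident edges form two straight lines through v: the four outward unit tangent vectors can be partitioned into two pairs of opposite vectors. -/
/-!
Identify the plane with `ℂ`. For unit complex numbers `z⁻¹ = conj z`, so the balancing
condition `a + b + c + d = 0` also gives `a⁻¹ + b⁻¹ + c⁻¹ + d⁻¹ = 0`. Hence `a, b, c, d` are the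
roots of an even quartic `X⁴ + e₂ X² + e₄`, and its roots come in opposite pairs.
-/

-- `(a + b) (a + c) (a + d) = a² e₁ + e₃`, and `e₃ = e₄ (a⁻¹ + b⁻¹ + c⁻¹ + d⁻¹)`.
theorem add_eq_zero_pairing_of_sum_eq_zero_of_sum_inv_eq_zero {K : Type*} [Field K]
    {a b c d : K}
    (ha : a ≠ 0) (hb : b ≠ 0) (hc : c ≠ 0) (hd : d ≠ 0)
    (hsum : a + b + c + d = 0) (hinv : a⁻¹ + b⁻¹ + c⁻¹ + d⁻¹ = 0) :
    (a + b = 0 ∧ c + d = 0) ∨ (a + c = 0 ∧ b + d = 0) ∨ (a + d = 0 ∧ b + c = 0) := by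
  have he₃ : b * c * d + a * c * d + a * b * d + a * b * c = 0 := by
    field_simp at hinv
    linear_combination hinv
  have hprod : (a + b) * (a + c) * (a + d) = 0 := by
    linear_combination a ^ 2 * hsum + he₃
  rcases mul_eq_zero.mp hprod with hab | had
  · rcases mul_eq_zero.mp hab with hab | hac
    · exact .inl ⟨hab, by linear_combination hsum - hab⟩
    · exact .inr (.inl ⟨hac, by linear_combination hsum - hac⟩)
  · exact .inr (.inr ⟨had, by linear_combination hsum - had⟩)

theorem Complex.add_eq_zero_pairing_of_norm_eq_one {a b c d : ℂ}
    (ha : ‖a‖ = 1) (hb : ‖b‖ = 1) (hc : ‖c‖ = 1) (hd : ‖d‖ = 1)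
    (hsum : a + b + c + d = 0) :
    (a + b = 0 ∧ c + d = 0) ∨ (a + c = 0 ∧ b + d = 0) ∨ (a + d = 0 ∧ b + c = 0) := by
  have hinv : a⁻¹ + b⁻¹ + c⁻¹ + d⁻¹ = 0 := by
    simp only [Complex.inv_eq_conj, ha, hb, hc, hd, ← map_add, hsum, map_zero]
  have hne {z : ℂ} (hz : ‖z‖ = 1) : z ≠ 0 := ne_zero_of_norm_ne_zero (hz ▸ one_ne_zero)
  exact add_eq_zero_pairing_of_sum_eq_zero_of_sum_inv_eq_zero (hne ha) (hne hb) (hne hc) (hne hd)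
    hsum hinv

theorem balanced_degree_four_two_lines_general (u : Fin 4 → EuclideanSpace ℝ (Fin 2))
    (hu : ∀ i, ‖u i‖ = 1)
    (hsum : ∑ i, u i = 0) :
    (u 0 = -u 1 ∧ u 2 = -u 3) ∨ (u 0 = -u 2 ∧ u 1 = -u 3) ∨
      (u 0 = -u 3 ∧ u 1 = -u 2) := by
  let e := Complex.orthonormalBasisOneI.repr.symm
  have hz : ∀ i, ‖e (u i)‖ = 1 := by simp [hu]
  have hzsum : e (u 0) + e (u 1) + e (u 2) + e (u 3) = 0 := by
    simp only [← map_add, ← Fin.sum_univ_four, hsum, map_zero]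
  have hopp : ∀ i j, e (u i) + e (u j) = 0 ↔ u i = -u j := by
    intro i j
    rw [← map_add, LinearIsometryEquiv.map_eq_zero_iff, add_eq_zero_iff_eq_neg]
  simpa only [hopp] using
    Complex.add_eq_zero_pairing_of_norm_eq_one (hz 0) (hz 1) (hz 2) (hz 3) hzsum

/-- At a balanced vertex of degree 4 in a geodesic net in ℝ², the four pairwise
distinct outward unit tangent vectors split into two pairs of opposite vectors
(the four edges form two straight lines through the vertex). -/
theorem balanced_degree_four_two_lines (u : Fin 4 → EuclideanSpace ℝ (Fin 2))
    (hu : ∀ i, ‖u i‖ = 1) (hinj : Function.Injective u)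
    (hsum : ∑ i, u i = 0) :
    (u 0 = -u 1 ∧ u 2 = -u 3) ∨ (u 0 = -u 2 ∧ u 1 = -u 3) ∨
      (u 0 = -u 3 ∧ u 1 = -u 2) :=
  balanced_degree_four_two_lines_general u hu hsum
end

section
/- If v ∈ ℝ² is an unbalanced vertex whose imbalance vector has norm strictly between 0 and 2, then there exist at least two (in fact uncountably many) pairs of distinct angles (α₁, α₂, α₃) such that adding three unit vectors making angles αᵢ with −Imb(v) balances the vertex; i.e., the system cos α₁ + cos α₂ + cos α₃ = imb(v) and sin α₁ + sin α₂ + sin α₃ = 0 has uncountably many solutions. -/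
/-!
A vector `c` with `‖c‖ ≤ 2` is the sum of two unit vectors `c/2 ± t e`, where `e` is a unit
vector orthogonal to `c` and `t = √(1 - ‖c‖²/4)`. Hence every unit vector `w` with
`‖b + w‖ ≤ 2` is the third vector of a balancing triple. Since `‖b‖ < 2`, the unit vector
`-b/‖b‖` satisfies this strictly, and so does every unit vector near it; as the circle is
connected, distance to a fixed point takes a whole interval of values on any neighbourhood of
that point, so there are uncountably many such `w`.
-/

open Metric Set

open scoped RealInnerProductSpace

variable {E : Type*} [NormedAddCommGroup E] [InnerProductSpace ℝ E]

theorem exists_norm_eq_one_inner_eq_zero (hE : 1 < Module.rank ℝ E) (c : E) :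
    ∃ e : E, ‖e‖ = 1 ∧ ⟪c, e⟫ = 0 := by
  have hspan : (ℝ ∙ c) ≠ ⊤ := fun htop ↦ by
    have := rank_span_le (R := ℝ) ({c} : Set E)
    rw [htop, rank_top, Cardinal.mk_singleton] at this
    exact hE.not_ge this
  obtain ⟨x, hx, hx0⟩ :=
    Submodule.exists_mem_ne_zero_of_ne_bot (mt Submodule.orthogonal_eq_bot_iff.mp hspan)
  refine ⟨‖x‖⁻¹ • x, norm_smul_inv_norm hx0, ?_⟩
  rw [real_inner_smul_right, Submodule.mem_orthogonal_singleton_iff_inner_right.mp hx, mul_zero]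

theorem norm_half_add_smul_eq_one {c e : E} (he : ‖e‖ = 1) (hce : ⟪c, e⟫ = 0) {t : ℝ}
    (ht : t ^ 2 = 1 - ‖c‖ ^ 2 / 4) : ‖(2⁻¹ : ℝ) • c + t • e‖ = 1 := by
  have hperp : ⟪(2⁻¹ : ℝ) • c, t • e⟫ = 0 := by
    rw [real_inner_smul_left, real_inner_smul_right, hce]; ring
  have hsq := norm_add_sq_eq_norm_sq_add_norm_sq_real hperp
  rw [norm_smul, norm_smul, he, Real.norm_eq_abs, Real.norm_eq_abs, mul_one, abs_mul_abs_self,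
    abs_of_pos (by norm_num : (0 : ℝ) < 2⁻¹)] at hsq
  refine (pow_eq_one_iff_of_nonneg (norm_nonneg _) two_ne_zero).mp ?_
  rw [sq, hsq]
  linear_combination ht

theorem exists_norm_eq_one_add_eq (hE : 1 < Module.rank ℝ E) {c : E} (hc : ‖c‖ ≤ 2) :
    ∃ u v : E, ‖u‖ = 1 ∧ ‖v‖ = 1 ∧ u + v = c := by
  obtain ⟨e, he, hce⟩ := exists_norm_eq_one_inner_eq_zero hE c
  set t := √(1 - ‖c‖ ^ 2 / 4)
  have ht : t ^ 2 = 1 - ‖c‖ ^ 2 / 4 :=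
    Real.sq_sqrt (by nlinarith [norm_nonneg c])
  refine ⟨(2⁻¹ : ℝ) • c + t • e, (2⁻¹ : ℝ) • c + (-t) • e, norm_half_add_smul_eq_one he hce ht,
    norm_half_add_smul_eq_one he hce (by rw [neg_sq, ht]), ?_⟩
  rw [neg_smul, add_add_add_comm, add_neg_cancel, add_zero, ← add_smul]
  norm_num

theorem not_countable_sphere_inter_ball (hE : 1 < Module.rank ℝ E) {x a : E} {r δ : ℝ}
    (ha : a ∈ sphere x r) (hr : 0 < r) (hδ : 0 < δ) :
    ¬ (sphere x r ∩ ball a δ).Countable := by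
  intro hcount
  rw [mem_sphere] at ha
  have hIcc : Icc 0 (2 * r) ⊆ (dist · a) '' sphere x r := by
    have hcont : Continuous (dist · a) := continuous_id.dist continuous_const
    refine ((isPreconnected_sphere hE x r).image _ hcont.continuousOn).Icc_subset
      ⟨a, ha, dist_self a⟩ ⟨AffineIsometryEquiv.pointReflection ℝ x a, ?_, ?_⟩
    · rwa [mem_sphere, AffineIsometryEquiv.dist_pointReflection_fixed]
    · dsimp only
      rw [AffineIsometryEquiv.dist_pointReflection_self_real, dist_comm, ha]
  have hIoo : Ioo 0 (min δ (2 * r)) ⊆ (dist · a) '' (sphere x r ∩ ball a δ) := by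
    intro s hs
    obtain ⟨w, hw, rfl⟩ := hIcc ⟨hs.1.le, hs.2.le.trans (min_le_right _ _)⟩
    exact ⟨w, ⟨hw, mem_ball.mpr (hs.2.trans_le (min_le_left _ _))⟩, rfl⟩
  have := Cardinal.Real.Ioo_countable_iff.mp ((hcount.image _).mono hIoo)
  exact (lt_min hδ (by positivity)).not_ge this

/-- If the imbalance vector `b = Imb v` at an unbalanced vertex in ℝ² has norm
strictly between 0 and 2, then the set of triples of unit vectors summing to `-b`
(which balance the vertex) is uncountable. -/
theorem uncountably_many_balancing_triples (b : EuclideanSpace ℝ (Fin 2))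
    (h0 : 0 < ‖b‖) (h2 : ‖b‖ < 2) :
    ¬ Set.Countable {p : EuclideanSpace ℝ (Fin 2) × EuclideanSpace ℝ (Fin 2) ×
        EuclideanSpace ℝ (Fin 2) |
      ‖p.1‖ = 1 ∧ ‖p.2.1‖ = 1 ∧ ‖p.2.2‖ = 1 ∧ p.1 + p.2.1 + p.2.2 = -b} := by
  have hE : 1 < Module.rank ℝ (EuclideanSpace ℝ (Fin 2)) := by
    rw [← Module.finrank_eq_rank, finrank_euclideanSpace_fin]
    norm_num
  set a := -(‖b‖⁻¹ • b)
  have ha : a ∈ sphere 0 1 := by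
    rw [mem_sphere_zero_iff_norm, norm_neg, norm_smul, norm_inv, norm_norm, inv_mul_cancel₀ h0.ne']
  have hba : ‖b + a‖ < 2 :=
    calc ‖b + a‖ = ‖(1 - ‖b‖⁻¹) • b‖ := by rw [sub_smul, one_smul, ← sub_eq_add_neg]
      _ = |(1 - ‖b‖⁻¹) * ‖b‖| := by rw [norm_smul, Real.norm_eq_abs, abs_mul, abs_norm]
      _ = |‖b‖ - 1| := by rw [sub_mul, one_mul, inv_mul_cancel₀ h0.ne']
      _ < 2 := abs_sub_lt_iff.mpr ⟨by linarith, by linarith⟩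
  intro hS
  refine not_countable_sphere_inter_ball hE ha one_pos (sub_pos.mpr hba)
    ((hS.image fun p ↦ p.2.2).mono ?_)
  rintro w ⟨hw, hwa⟩
  have hc : ‖-b - w‖ ≤ 2 :=
    calc ‖-b - w‖ = ‖(b + a) + (w - a)‖ := by rw [← norm_neg]; congr 1; abel
      _ ≤ ‖b + a‖ + dist w a := by rw [dist_eq_norm]; exact norm_add_le _ _
      _ ≤ 2 := by linarith [mem_ball.mp hwa]
  obtain ⟨u, v, hu, hv, huv⟩ := exists_norm_eq_one_add_eq hE hc
  exact ⟨(u, v, w), ⟨hu, hv, mem_sphere_zero_iff_norm.mp hw, by rw [huv]; abel⟩, rfl⟩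
end

section
/- Let P, v, Q be three points in ℝ² forming a triangle whose interior angles are all less than 120°. Then there exists a unique point F in the interior of triangle PvQ such that the three angles ∠PFQ, ∠QFv, ∠vFP are all equal to 120°. -/
/-!
The Fermat point is the minimiser of the sum of the distances to the vertices. A minimiser `F`
exists by properness, and a one-sided first-order condition bounds the norm of the sum of the
unit vectors from `F` towards the vertices by the number of vertices equal to `F`. At a vertex
whose angle is below 120° the two other unit vectors sum to a vector of norm `> 1`, so `F` is not
a vertex and the three unit vectors sum to zero, which for unit vectors means exactly that they
pairwise make angles of 120°. Their vanishing sum writes `F` as a combination of the vertices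
with positive weights, so `F` is interior. Conversely, by Cauchy–Schwarz every point at which
the unit vectors sum to zero is a minimiser; for two distinct such points `F`, `G` the equality
case of Cauchy–Schwarz puts every vertex on the line `FG`.
-/

open Real EuclideanGeometry RealInnerProductSpace

section UnitDir

variable {V : Type*} [NormedAddCommGroup V] [InnerProductSpace ℝ V]

/-- The unit vector from `F` towards `p`; it is `0` when `p = F`, so sums of `unitDir F` over a
family of points may include `F` itself. -/
noncomputable def unitDir (F p : V) : V := ‖p - F‖⁻¹ • (p - F)

@[simp]
lemma unitDir_self (F : V) : unitDir F F = 0 := by simp [unitDir]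

lemma norm_unitDir {F p : V} (h : p ≠ F) : ‖unitDir F p‖ = 1 := by
  rw [unitDir, norm_smul, norm_inv, norm_norm,
    inv_mul_cancel₀ (norm_ne_zero_iff.mpr (sub_ne_zero.mpr h))]

lemma inner_unitDir_sub_self (F p : V) : ⟪unitDir F p, p - F⟫ = ‖p - F‖ := by
  rcases eq_or_ne p F with rfl | h
  · simp
  rw [unitDir, real_inner_smul_left, real_inner_self_eq_norm_sq]
  field_simp [norm_ne_zero_iff.mpr (sub_ne_zero.mpr h)]

lemma inner_unitDir_unitDir (F p q : V) : ⟪unitDir F p, unitDir F q⟫ = cos (∠ p F q) := by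
  rw [EuclideanGeometry.angle, InnerProductGeometry.cos_angle, unitDir, unitDir,
    real_inner_smul_left, real_inner_smul_right, vsub_eq_sub, vsub_eq_sub]
  field_simp

lemma cos_two_pi_div_three : cos (2 * π / 3) = -(1 / 2) := by
  rw [show 2 * π / 3 = π - π / 3 by ring, cos_pi_sub, cos_pi_div_three]

lemma angle_eq_two_pi_div_three_iff {F p q : V} :
    ∠ p F q = 2 * π / 3 ↔ ⟪unitDir F p, unitDir F q⟫ = -(1 / 2) := by
  rw [inner_unitDir_unitDir, ← cos_two_pi_div_three]
  exact injOn_cos.eq_iff ⟨angle_nonneg _ _ _, angle_le_pi _ _ _⟩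
    ⟨by positivity, by linarith [pi_pos]⟩ |>.symm

lemma neg_half_lt_inner_unitDir_of_angle_lt {F p q : V} (h : ∠ p F q < 2 * π / 3) :
    -(1 / 2) < ⟪unitDir F p, unitDir F q⟫ := by
  rw [inner_unitDir_unitDir, ← cos_two_pi_div_three]
  exact cos_lt_cos_of_nonneg_of_le_pi (angle_nonneg _ _ _) (by linarith [pi_pos]) h

lemma ne_of_angle_eq_two_pi_div_three {F p q : V} (h : ∠ p F q = 2 * π / 3) :
    p ≠ F ∧ q ≠ F := by
  constructor <;> rintro rfl <;> simp at h <;> linarith [pi_pos]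

lemma add_add_eq_zero_iff_inner_eq_neg_half {a b c : V} (ha : ‖a‖ = 1) (hb : ‖b‖ = 1)
    (hc : ‖c‖ = 1) :
    a + b + c = 0 ↔ ⟪a, c⟫ = -(1 / 2) ∧ ⟪c, b⟫ = -(1 / 2) ∧ ⟪b, a⟫ = -(1 / 2) := by
  have hsq : ∀ x y : V, ‖x‖ = 1 → ‖y‖ = 1 → ‖x + y‖ ^ 2 = 2 + 2 * ⟪x, y⟫ := by
    intro x y hx hy
    rw [norm_add_sq_real, hx, hy]; ring
  constructor
  · intro h
    have hac : a + c = -b := eq_neg_of_add_eq_zero_left (by rw [← h]; abel)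
    have hcb : c + b = -a := eq_neg_of_add_eq_zero_left (by rw [← h]; abel)
    have hba : b + a = -c := eq_neg_of_add_eq_zero_left (by rw [← h]; abel)
    refine ⟨?_, ?_, ?_⟩
    · linarith [hsq a c ha hc, show ‖a + c‖ ^ 2 = 1 by rw [hac, norm_neg, hb]; norm_num]
    · linarith [hsq c b hc hb, show ‖c + b‖ ^ 2 = 1 by rw [hcb, norm_neg, ha]; norm_num]
    · linarith [hsq b a hb ha, show ‖b + a‖ ^ 2 = 1 by rw [hba, norm_neg, hc]; norm_num]
  · rintro ⟨hac, hcb, hba⟩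
    rw [← norm_eq_zero, ← sq_eq_zero_iff (M₀ := ℝ), ← real_inner_self_eq_norm_sq]
    simp only [inner_add_left, inner_add_right, real_inner_self_eq_norm_sq, ha, hb, hc]
    rw [real_inner_comm a c, real_inner_comm c b, real_inner_comm b a] at *
    linarith

lemma unitDir_add_add_eq_zero_iff {F P v Q : V} (hP : P ≠ F) (hv : v ≠ F) (hQ : Q ≠ F) :
    unitDir F P + unitDir F v + unitDir F Q = 0 ↔
      ∠ P F Q = 2 * π / 3 ∧ ∠ Q F v = 2 * π / 3 ∧ ∠ v F P = 2 * π / 3 := by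
  rw [add_add_eq_zero_iff_inner_eq_neg_half (norm_unitDir hP) (norm_unitDir hv) (norm_unitDir hQ)]
  simp only [angle_eq_two_pi_div_three_iff]

lemma one_lt_norm_unitDir_add_unitDir {F p q : V} (hp : p ≠ F) (hq : q ≠ F)
    (h : ∠ p F q < 2 * π / 3) : 1 < ‖unitDir F p + unitDir F q‖ := by
  have hsq : ‖unitDir F p + unitDir F q‖ ^ 2 = 2 + 2 * ⟪unitDir F p, unitDir F q⟫ := by
    rw [norm_add_sq_real, norm_unitDir hp, norm_unitDir hq]; ring
  nlinarith [neg_half_lt_inner_unitDir_of_angle_lt h, norm_nonneg (unitDir F p + unitDir F q)]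

lemma hasDerivAt_norm_sub_add_smul {F p : V} (h : p ≠ F) (d : V) :
    HasDerivAt (fun t : ℝ => ‖p - (F + t • d)‖) (-⟪unitDir F p, d⟫) 0 := by
  have hline : HasDerivAt (fun t : ℝ => p - (F + t • d)) (-d) 0 := by
    simpa using (((hasDerivAt_id (0 : ℝ)).smul_const d).const_add F).const_sub p
  have hne : ‖p - (F + (0 : ℝ) • d)‖ ^ 2 ≠ 0 := by simpa [sub_eq_zero] using h
  convert hline.norm_sq.sqrt hne using 1
  · ext t; rw [sqrt_sq (norm_nonneg _)]
  · simp only [zero_smul, add_zero, sqrt_sq (norm_nonneg _), unitDir, real_inner_smul_left,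
      inner_neg_right]
    field_simp

end UnitDir

section FermatWeber

variable {ι V : Type*} [Fintype ι] [NormedAddCommGroup V] [InnerProductSpace ℝ V]

lemma exists_forall_sum_dist_le {E : Type*} [MetricSpace E] [ProperSpace E] [Nonempty ι]
    (p : ι → E) : ∃ F, ∀ X, ∑ i, dist (p i) F ≤ ∑ i, dist (p i) X := by
  obtain ⟨i⟩ := ‹Nonempty ι›
  have : Nonempty E := ⟨p i⟩
  refine Continuous.exists_forall_le (by fun_prop) ?_
  refine Filter.tendsto_atTop_mono (fun X => ?_) (tendsto_dist_left_cocompact_atTop (p i))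
  exact Finset.single_le_sum (f := fun j => dist (p j) X) (fun _ _ => dist_nonneg)
    (Finset.mem_univ i)

lemma norm_sum_unitDir_le_card {p : ι → V} {F : V}
    (hF : ∀ X, ∑ i, dist (p i) F ≤ ∑ i, dist (p i) X) :
    ‖∑ i, unitDir F (p i)‖ ≤ Nat.card {i // p i = F} := by
  classical
  set S := ∑ i, unitDir F (p i)
  -- for `t ≥ 0`, `ψ i t = dist (p i) (F + t • S)`, and `ψ i` is differentiable at `0`
  let ψ : ι → ℝ → ℝ := fun i t => if p i = F then t * ‖S‖ else ‖p i - (F + t • S)‖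
  have hψ : ∀ i, HasDerivAt (ψ i) ((if p i = F then ‖S‖ else 0) - ⟪unitDir F (p i), S⟫) 0 := by
    intro i
    by_cases h : p i = F
    · simpa [ψ, h] using (hasDerivAt_id (0 : ℝ)).mul_const ‖S‖
    · simpa [ψ, h] using hasDerivAt_norm_sub_add_smul h S
  have hmin : IsLocalMinOn (fun t => ∑ i, ψ i t) (Set.Ici 0) 0 := by
    refine Filter.eventually_of_mem self_mem_nhdsWithin fun t (ht : 0 ≤ t) => ?_
    have h0 : ∀ i, ψ i 0 = dist (p i) F := fun i => by
      by_cases h : p i = F <;> simp [ψ, h, dist_eq_norm]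
    have hψt : ∀ i, ψ i t = dist (p i) (F + t • S) := fun i => by
      by_cases h : p i = F <;> simp [ψ, h, dist_eq_norm, norm_smul, abs_of_nonneg ht]
    simpa only [h0, hψt] using hF (F + t • S)
  have hslope := hmin.hasFDerivWithinAt_nonneg (y := 1)
    (HasDerivAt.fun_sum (fun i _ => hψ i)).hasDerivWithinAt.hasFDerivWithinAt
    (mem_posTangentConeAt_of_segment_subset (by simp [segment_eq_Icc, Set.Icc_subset_Ici_self]))
  have hsum : ∑ i, ((if p i = F then ‖S‖ else 0) - ⟪unitDir F (p i), S⟫)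
      = Nat.card {i // p i = F} * ‖S‖ - ‖S‖ ^ 2 := by
    rw [Finset.sum_sub_distrib, ← sum_inner, real_inner_self_eq_norm_sq, Finset.sum_ite,
      Finset.sum_const_zero, add_zero, Finset.sum_const, nsmul_eq_mul, Nat.card_eq_fintype_card,
      Fintype.card_subtype]
  rw [ContinuousLinearMap.toSpanSingleton_apply, one_smul, hsum] at hslope
  rcases (norm_nonneg S).eq_or_lt with h | h
  · rw [← h]; positivity
  · nlinarith

lemma sum_unitDir_eq_zero_of_forall_ne {p : ι → V} {F : V}
    (hF : ∀ X, ∑ i, dist (p i) F ≤ ∑ i, dist (p i) X) (hne : ∀ i, p i ≠ F) :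
    ∑ i, unitDir F (p i) = 0 := by
  have : IsEmpty {i // p i = F} := (isEmpty_subtype _).mpr hne
  simpa using norm_sum_unitDir_le_card hF

lemma norm_sum_unitDir_le_one {p : ι → V} (hp : Function.Injective p) {F : V}
    (hF : ∀ X, ∑ i, dist (p i) F ≤ ∑ i, dist (p i) X) : ‖∑ i, unitDir F (p i)‖ ≤ 1 := by
  have : Nat.card {i // p i = F} ≤ 1 := Finite.card_le_one_iff_subsingleton.mpr
    ⟨fun a b => Subtype.ext (hp (a.2.trans b.2.symm))⟩
  exact (norm_sum_unitDir_le_card hF).trans (by exact_mod_cast this)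

lemma dist_add_inner_unitDir_le (F p X : V) : dist p F + ⟪unitDir F p, F - X⟫ ≤ dist p X := by
  have hcs : ⟪unitDir F p, p - X⟫ ≤ dist p X := by
    rcases eq_or_ne p F with rfl | h
    · simp
    simpa [norm_unitDir h, dist_eq_norm] using real_inner_le_norm (unitDir F p) (p - X)
  rw [dist_eq_norm, ← inner_unitDir_sub_self, ← inner_add_right, sub_add_sub_cancel]
  exact hcs

lemma sum_dist_le_of_sum_unitDir_eq_zero {p : ι → V} {G : V}
    (hG : ∑ i, unitDir G (p i) = 0) (X : V) : ∑ i, dist (p i) G ≤ ∑ i, dist (p i) X := by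
  have h := Finset.sum_le_sum fun i (_ : i ∈ Finset.univ) => dist_add_inner_unitDir_le G (p i) X
  rwa [Finset.sum_add_distrib, ← sum_inner, hG, inner_zero_left, add_zero] at h

lemma mem_affineSpan_pair_of_sameRay {F G p : V} (hne : F ≠ G)
    (h : SameRay ℝ (p - G) (p - F)) : p ∈ line[ℝ, F, G] := by
  have hray : SameRay ℝ (G -ᵥ p) (F -ᵥ p) := by simpa using h.neg
  have hcol : Collinear ℝ {p, G, F} := by
    rcases wbtw_total_of_sameRay_vsub_left hray with hw | hw
    · exact hw.collinear
    · rw [Set.pair_comm]; exact hw.collinear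
  exact hcol.mem_affineSpan_of_mem_of_ne (by simp) (by simp) (by simp) hne

lemma sameRay_of_inner_unitDir_eq_norm {G p X : V} (h : ⟪unitDir G p, p - X⟫ = ‖p - X‖) :
    SameRay ℝ (p - G) (p - X) := by
  rcases eq_or_ne p G with rfl | hpG
  · simp
  have hX : ‖p - X‖ • unitDir G p = p - X := by
    have := inner_eq_norm_mul_iff_real.mp (by rw [h, norm_unitDir hpG, one_mul])
    rwa [norm_unitDir hpG, one_smul] at this
  rw [← hX, unitDir, smul_smul]
  exact SameRay.sameRay_nonneg_smul_right _ (by positivity)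

lemma mem_affineSpan_pair_of_sum_unitDir_eq_zero {p : ι → V} {F G : V}
    (hF : ∑ i, unitDir F (p i) = 0) (hG : ∑ i, unitDir G (p i) = 0) (hne : F ≠ G) (i : ι) :
    p i ∈ line[ℝ, F, G] := by
  set gap : ι → ℝ := fun j => dist (p j) F - (dist (p j) G + ⟪unitDir G (p j), G - F⟫)
  have hgap : ∀ j ∈ Finset.univ, 0 ≤ gap j :=
    fun j _ => sub_nonneg.mpr (dist_add_inner_unitDir_le G (p j) F)
  have hsum : ∑ j, gap j = 0 := by
    refine le_antisymm ?_ (Finset.sum_nonneg hgap)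
    simp only [gap, Finset.sum_sub_distrib, Finset.sum_add_distrib, ← sum_inner, hG,
      inner_zero_left, add_zero]
    linarith [sum_dist_le_of_sum_unitDir_eq_zero hF G]
  have hi : gap i = 0 := (Finset.sum_eq_zero_iff_of_nonneg hgap).mp hsum i (Finset.mem_univ i)
  refine mem_affineSpan_pair_of_sameRay hne (sameRay_of_inner_unitDir_eq_norm ?_)
  have hsplit : ⟪unitDir G (p i), p i - F⟫ = ‖p i - G‖ + ⟪unitDir G (p i), G - F⟫ := by
    rw [← inner_unitDir_sub_self, ← inner_add_right, sub_add_sub_cancel]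
  simp only [gap, dist_eq_norm] at hi
  linarith

end FermatWeber

lemma AffineBasis.mem_interior_convexHull_of_sum_smul_sub_eq_zero {ι E : Type*} [Fintype ι]
    [NormedAddCommGroup E] [NormedSpace ℝ E] (b : AffineBasis ι ℝ E) {w : ι → ℝ}
    (hw : ∀ i, 0 < w i) {x : E} (h : ∑ i, w i • (b i - x) = 0) :
    x ∈ interior (convexHull ℝ (Set.range b)) := by
  obtain ⟨j⟩ := b.nonempty
  set W := ∑ i, w i
  have hW : 0 < W := Finset.sum_pos (fun i _ => hw i) ⟨j, Finset.mem_univ j⟩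
  have hsum : ∑ i, w i / W = 1 := by rw [← Finset.sum_div, div_self hW.ne']
  have hx : Finset.univ.affineCombination ℝ b (fun i => w i / W) = x := by
    rw [Finset.univ.affineCombination_eq_linear_combination _ _ hsum]
    simp only [smul_sub, Finset.sum_sub_distrib] at h
    rw [← Finset.sum_smul, sub_eq_zero] at h
    simp_rw [div_eq_inv_mul, mul_smul]
    rw [← Finset.smul_sum, h, smul_smul, inv_mul_cancel₀ hW.ne', one_smul]
  rw [b.interior_convexHull]
  intro i
  rw [← hx, b.coord_apply_combination_of_mem (Finset.mem_univ i) hsum]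
  exact div_pos (hw i) hW

lemma ne_of_forall_sum_dist_le_of_angle_lt {V : Type*} [NormedAddCommGroup V]
    [InnerProductSpace ℝ V] {P v Q F : V} (hinj : Function.Injective ![P, v, Q])
    (hP : ∠ v P Q < 2 * π / 3) (hv : ∠ P v Q < 2 * π / 3) (hQ : ∠ P Q v < 2 * π / 3)
    (hF : ∀ X, ∑ i, dist (![P, v, Q] i) F ≤ ∑ i, dist (![P, v, Q] i) X) :
    P ≠ F ∧ v ≠ F ∧ Q ≠ F := by
  have hPv : P ≠ v := hinj.ne (by decide : (0 : Fin 3) ≠ 1)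
  have hPQ : P ≠ Q := hinj.ne (by decide : (0 : Fin 3) ≠ 2)
  have hvQ : v ≠ Q := hinj.ne (by decide : (1 : Fin 3) ≠ 2)
  have h : ‖unitDir F P + unitDir F v + unitDir F Q‖ ≤ 1 := by
    simpa [Fin.sum_univ_three] using norm_sum_unitDir_le_one hinj hF
  refine ⟨?_, ?_, ?_⟩ <;> rintro rfl <;> simp only [unitDir_self, zero_add, add_zero] at h
  · exact (one_lt_norm_unitDir_add_unitDir hPv.symm hPQ.symm hP).not_ge h
  · exact (one_lt_norm_unitDir_add_unitDir hPv hvQ.symm hv).not_ge h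
  · exact (one_lt_norm_unitDir_add_unitDir hPQ hvQ hQ).not_ge h

/-- A triangle `P v Q` in ℝ² all of whose interior angles are less than 120° has
a unique Fermat (Torricelli) point: a point `F` in the interior of the triangle
at which all three sides subtend an angle of 120°. -/
theorem fermat_point_of_triangle (P v Q : EuclideanSpace ℝ (Fin 2))
    (hind : AffineIndependent ℝ ![P, v, Q])
    (hP : ∠ v P Q < 2 * π / 3)
    (hv : ∠ P v Q < 2 * π / 3)
    (hQ : ∠ P Q v < 2 * π / 3) :
    ∃! F : EuclideanSpace ℝ (Fin 2),
      F ∈ interior (convexHull ℝ ({P, v, Q} : Set (EuclideanSpace ℝ (Fin 2)))) ∧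
      ∠ P F Q = 2 * π / 3 ∧ ∠ Q F v = 2 * π / 3 ∧ ∠ v F P = 2 * π / 3 := by
  have hsum : ∀ X, ∑ i, unitDir X (![P, v, Q] i) = unitDir X P + unitDir X v + unitDir X Q :=
    fun X => Fin.sum_univ_three _
  obtain ⟨F, hF⟩ := exists_forall_sum_dist_le ![P, v, Q]
  have hvert := ne_of_forall_sum_dist_le_of_angle_lt hind.injective hP hv hQ hF
  have hvert' : ∀ i, ![P, v, Q] i ≠ F := by simpa [Fin.forall_fin_succ] using hvert
  have hS := sum_unitDir_eq_zero_of_forall_ne hF hvert'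
  have hspan : affineSpan ℝ (Set.range ![P, v, Q]) = ⊤ := by
    rw [hind.affineSpan_eq_top_iff_card_eq_finrank_add_one]
    simp
  have hrange : Set.range ![P, v, Q] = {P, v, Q} := by
    simp only [Matrix.range_cons, Matrix.range_empty, Set.union_empty, Set.singleton_union]
  refine ⟨F, ⟨?_, (unitDir_add_add_eq_zero_iff hvert.1 hvert.2.1 hvert.2.2).mp (hsum F ▸ hS)⟩, ?_⟩
  · rw [← hrange]
    exact (AffineBasis.mk _ hind hspan).mem_interior_convexHull_of_sum_smul_sub_eq_zero
      (fun i => inv_pos.mpr (norm_pos_iff.mpr (sub_ne_zero.mpr (hvert' i)))) hS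
  · rintro G ⟨-, hG⟩
    obtain ⟨hGP, hGQ⟩ := ne_of_angle_eq_two_pi_div_three hG.1
    have hGv := (ne_of_angle_eq_two_pi_div_three hG.2.1).2
    have hSG := hsum G ▸ (unitDir_add_add_eq_zero_iff hGP hGv hGQ).mpr hG
    by_contra hne
    have hline := mem_affineSpan_pair_of_sum_unitDir_eq_zero hSG hS hne
    exact affineIndependent_iff_not_collinear_set.mp hind
      (collinear_triple_of_mem_affineSpan_pair (hline 0) (hline 1) (hline 2))
end

section
/- Define α_{i+1} = 12π/7 − β_i with β_i = 2π − α_i when α_i > π and β_i = 2·arccos(1/2 − cos(α_i/2)) when α_i < π. If 2π/3 < α_i < 19π/18 and α_i ≠ π, then 2π/3 < α_{i+1} < 19π/18. -/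
open Real

/-- Induction step for the angle bounds in the star construction: with
`α_{i+1} = 12π/7 - β_i`, where `β_i = 2π - α_i` if `α_i > π` and
`β_i = 2·arccos(1/2 - cos(α_i/2))` if `α_i < π`, the bounds
`2π/3 < α_i < 19π/18` (and `α_i ≠ π`) imply `2π/3 < α_{i+1} < 19π/18`. -/
theorem alpha_bounds_step (a b : ℝ)
    (h1 : 2 * π / 3 < a) (h2 : a < 19 * π / 18) (hne : a ≠ π)
    (hgt : π < a → b = 12 * π / 7 - (2 * π - a))
    (hlt : a < π → b = 12 * π / 7 - 2 * Real.arccos (1 / 2 - Real.cos (a / 2))) :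
    2 * π / 3 < b ∧ b < 19 * π / 18 := by
  have hpi := Real.pi_pos
  rcases lt_or_gt_of_ne hne with hl | hg
  · -- case a < π
    have hb := hlt hl
    set x := 1 / 2 - Real.cos (a / 2) with hx
    have hcos_pos : 0 < Real.cos (a / 2) := by
      apply Real.cos_pos_of_mem_Ioo
      constructor <;> nlinarith
    have hcos_lt : Real.cos (a / 2) < 1 / 2 := by
      have := Real.cos_lt_cos_of_nonneg_of_le_pi (x := π / 3) (y := a / 2)
        (by positivity) (by linarith) (by linarith)
      rwa [Real.cos_pi_div_three] at this
    have hx0 : 0 < x := by simp [hx]; linarith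
    have hx1 : x < 1 / 2 := by simp [hx]; linarith
    have harc_lt : Real.arccos x < π / 2 := Real.arccos_lt_pi_div_two.mpr hx0
    have harc_gt : π / 3 < Real.arccos x := by
      have := Real.strictAntiOn_arccos (a := x) (b := 1 / 2)
        ⟨le_of_lt (by linarith : (-1:ℝ) < x), hx1.le.trans (by norm_num)⟩ ⟨by norm_num, by norm_num⟩ hx1
      have h13 : Real.arccos (1 / 2) = π / 3 := by
        rw [show (1 : ℝ) / 2 = Real.cos (π / 3) by rw [Real.cos_pi_div_three]]
        exact Real.arccos_cos (by positivity) (by linarith)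
      rw [h13] at this
      linarith
    constructor <;> rw [hb] <;> linarith
  · have hb := hgt hg
    constructor <;> rw [hb] <;> linarith
end

section
/- If π/2·(4/3) = 2π/3 < β < π (i.e., 120° < β < 180°), then the ratio f(β) = sin(β/2) / sin(1080°/7 − β/2) is a strictly increasing function of β. -/
open Real

lemma sin_diff_identity (x y c : ℝ) :
    Real.sin y * Real.sin (c - x) - Real.sin x * Real.sin (c - y)
      = Real.sin c * Real.sin (y - x) := by
  rw [Real.sin_sub, Real.sin_sub, Real.sin_sub]; ring

/-- The contraction factor `f(β) = sin(β/2) / sin(6π/7 - β/2)` of the star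
construction is strictly increasing for `2π/3 < β < π` (i.e. `120° < β < 180°`). -/
theorem contraction_factor_strictMono :
    StrictMonoOn (fun β : ℝ => Real.sin (β / 2) / Real.sin (6 * π / 7 - β / 2))
      (Set.Ioo (2 * π / 3) π) := by
  intro a ha b hb hab
  obtain ⟨ha1, ha2⟩ := ha
  obtain ⟨hb1, hb2⟩ := hb
  have hπ := Real.pi_pos
  have hda : (0:ℝ) < Real.sin (6 * π / 7 - a / 2) :=
    Real.sin_pos_of_pos_of_lt_pi (by linarith) (by linarith)
  have hdb : (0:ℝ) < Real.sin (6 * π / 7 - b / 2) :=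
    Real.sin_pos_of_pos_of_lt_pi (by linarith) (by linarith)
  have hc : (0:ℝ) < Real.sin (6 * π / 7) :=
    Real.sin_pos_of_pos_of_lt_pi (by linarith) (by linarith)
  have hs : (0:ℝ) < Real.sin (b / 2 - a / 2) :=
    Real.sin_pos_of_pos_of_lt_pi (by linarith) (by linarith)
  simp only
  rw [div_lt_div_iff₀ hda hdb]
  have key := sin_diff_identity (a / 2) (b / 2) (6 * π / 7)
  nlinarith [mul_pos hc hs]
end
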